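/- Let d₁, d₂ ≥ 1. For every f ∈ L^∞(ℝ^{d₁+d₂}) there exist a countable 1/2-sparse family S of dyadic rectangles and a constant C depending only on d₁ and d₂ such that M_{D×D} f(x) ≤ C · P^{1/2}_{D×D}(M_S f)(x) for all x ∈ ℝ^{d₁+d₂}, where M_{D×D} f(x) := sup { |⟨f⟩_{Q₁×Q₂}| : Q₁×Q₂ a dyadic rectangle containing x } is the strong maximal function, M_S f := sup_{R∈S} |⟨f⟩_R| 1_R, and P^{1/2}_{D×D}(g)(x) := sup { P_R^{1/2}(g) : R a dyadic rectangle containing x }. -/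

import Mathlib

/-!
Sort the rectangles with nonzero average lexicographically by the dyadic level `m` at which
`M / 2^(m+1) < |⟨f⟩_R| ≤ M / 2^m` (where `|f| ≤ M`) and then by an enumeration, and select them
greedily: `R` is kept when at most half of it is covered by previously kept rectangles, and the
uncovered part of `R` witnesses sparseness. Every rectangle preceding `R` has average larger than
`|⟨f⟩_R| / 2`, so for every `R`, kept or not, more than half of `R` is a set where
`M_S f ≥ |⟨f⟩_R| / 2`; that is, `|⟨f⟩_R| ≤ 2 P_R^{1/2}(M_S f)`.
-/

open MeasureTheory
open scoped ENNReal

/-- The dyadic cube in `ℝ^d` with scale `2^{-k}` and corner `2^{-k} n`. -/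
def dyadicCube (d : ℕ) (k : ℤ) (n : Fin d → ℤ) : Set (Fin d → ℝ) :=
  {x | ∀ i, (n i : ℝ) * (2 : ℝ) ^ (-k) ≤ x i ∧ x i < ((n i : ℝ) + 1) * (2 : ℝ) ^ (-k)}

/-- A dyadic rectangle in `ℝ^{d₁} × ℝ^{d₂}` is a product of two dyadic cubes. -/
def IsDyadicRect (d₁ d₂ : ℕ) (R : Set ((Fin d₁ → ℝ) × (Fin d₂ → ℝ))) : Prop :=
  ∃ (k₁ : ℤ) (n₁ : Fin d₁ → ℤ) (k₂ : ℤ) (n₂ : Fin d₂ → ℤ),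
    R = (dyadicCube d₁ k₁ n₁) ×ˢ (dyadicCube d₂ k₂ n₂)

/-- The average `⟨f⟩_R = |R|⁻¹ ∫_R f`. -/
noncomputable def rectAvg {d₁ d₂ : ℕ} (R : Set ((Fin d₁ → ℝ) × (Fin d₂ → ℝ)))
    (f : (Fin d₁ → ℝ) × (Fin d₂ → ℝ) → ℝ) : ℝ :=
  (volume R).toReal⁻¹ * ∫ y in R, f y

/-- The percentile of `g` over `R` at ratio `r`. -/
noncomputable def rectPerc {d₁ d₂ : ℕ} (R : Set ((Fin d₁ → ℝ) × (Fin d₂ → ℝ))) (r : ℝ)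
    (g : (Fin d₁ → ℝ) × (Fin d₂ → ℝ) → ℝ) : ℝ :=
  sInf {l : ℝ | volume {x ∈ R | g x > l} ≤ ENNReal.ofReal r * volume R}

/-- The biparametric (strong) dyadic maximal function. -/
noncomputable def strongMax (d₁ d₂ : ℕ) (f : (Fin d₁ → ℝ) × (Fin d₂ → ℝ) → ℝ)
    (x : (Fin d₁ → ℝ) × (Fin d₂ → ℝ)) : ℝ :=
  sSup {t : ℝ | ∃ R, IsDyadicRect d₁ d₂ R ∧ x ∈ R ∧ t = |rectAvg R f|}

/-- The biparametric percentile maximal function at ratio `1/2`. -/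
noncomputable def strongPercMax (d₁ d₂ : ℕ) (g : (Fin d₁ → ℝ) × (Fin d₂ → ℝ) → ℝ)
    (x : (Fin d₁ → ℝ) × (Fin d₂ → ℝ)) : ℝ :=
  sSup {t : ℝ | ∃ R, IsDyadicRect d₁ d₂ R ∧ x ∈ R ∧ t = rectPerc R (1 / 2) g}

section DyadicLevel

noncomputable def dyadicLevel (M t : ℝ) : ℕ :=
  sInf {m : ℕ | M < 2 ^ (m + 1) * t}

variable {M s t : ℝ}

lemma lt_two_pow_dyadicLevel_succ_mul (ht : 0 < t) : M < 2 ^ (dyadicLevel M t + 1) * t := by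
  obtain ⟨m, hm⟩ := pow_unbounded_of_one_lt (M / t) one_lt_two
  refine Nat.sInf_mem (s := {m : ℕ | M < 2 ^ (m + 1) * t}) ⟨m, ?_⟩
  rw [div_lt_iff₀ ht] at hm
  calc M < 2 ^ m * t := hm
    _ ≤ 2 ^ (m + 1) * t := by gcongr <;> norm_num

lemma two_pow_dyadicLevel_mul_le (htM : t ≤ M) : 2 ^ dyadicLevel M t * t ≤ M := by
  rcases Nat.eq_zero_or_eq_succ_pred (dyadicLevel M t) with h | h
  · simpa [h] using htM
  · rw [h]
    exact not_lt.1 (Nat.notMem_of_lt_sInf (h ▸ Nat.lt_succ_self _))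

lemma lt_two_mul_of_dyadicLevel_le (hs : 0 < s) (htM : t ≤ M)
    (h : dyadicLevel M s ≤ dyadicLevel M t) : t < 2 * s := by
  rcases le_or_gt t 0 with ht | ht
  · linarith
  have hpow : (2 : ℝ) ^ dyadicLevel M s ≤ 2 ^ dyadicLevel M t := pow_le_pow_right₀ one_le_two h
  have hs' := lt_two_pow_dyadicLevel_succ_mul (M := M) hs
  have ht' := two_pow_dyadicLevel_mul_le htM
  rw [pow_succ] at hs'
  have : (2 : ℝ) ^ dyadicLevel M s * t < 2 ^ dyadicLevel M s * (2 * s) := by nlinarith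
  exact lt_of_mul_lt_mul_left this (by positivity)

end DyadicLevel

lemma exists_wellFounded_forall_lt_two_mul {β : Type*} {s : Set β} (hs : s.Countable)
    {a : β → ℝ} {M : ℝ} (ha : ∀ P ∈ s, 0 < a P) (haM : ∀ P ∈ s, a P ≤ M) :
    ∃ r : β → β → Prop, WellFounded r ∧ (∀ P ∈ s, ∀ Q ∈ s, P ≠ Q → r P Q ∨ r Q P) ∧
      ∀ P ∈ s, ∀ Q ∈ s, r P Q → a Q < 2 * a P := by
  obtain ⟨e, he⟩ := Set.countable_iff_exists_injOn.1 hs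
  let key : β → ℕ ×ₗ ℕ := fun P => toLex (dyadicLevel M (a P), e P)
  refine ⟨fun P Q => key P < key Q, InvImage.wf key wellFounded_lt, ?_, ?_⟩
  · intro P hP Q hQ hPQ
    refine lt_or_gt_of_ne fun hkey => hPQ (he hP hQ ?_)
    exact congrArg Prod.snd (toLex.injective hkey)
  · intro P hP Q hQ hPQ
    refine lt_two_mul_of_dyadicLevel_le (ha P hP) (haM Q hQ) ?_
    rcases Prod.Lex.toLex_lt_toLex.1 hPQ with h | h
    · exact h.le
    · exact h.1.le

section GreedySelection

variable {α : Type*} [MeasurableSpace α] (μ : Measure α)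

def IsHalfSparse (S : Set (Set α)) : Prop :=
  ∃ E : Set α → Set α, (∀ R ∈ S, MeasurableSet (E R) ∧ E R ⊆ R ∧ μ R ≤ 2 * μ (E R)) ∧
    S.PairwiseDisjoint E

variable (𝓡 : Set (Set α)) {r : Set α → Set α → Prop} (hwf : WellFounded r)

def greedySelect : Set (Set α) :=
  {R | hwf.fix (fun R ih => R ∈ 𝓡 ∧ 2 * μ (R ∩ ⋃₀ {Q | ∃ h : r Q R, ih Q h}) ≤ μ R) R}

def greedyCovered (R : Set α) : Set α :=
  ⋃₀ {Q | Q ∈ greedySelect μ 𝓡 hwf ∧ r Q R}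

variable {μ 𝓡 hwf}

lemma mem_greedySelect {R : Set α} :
    R ∈ greedySelect μ 𝓡 hwf ↔ R ∈ 𝓡 ∧ 2 * μ (R ∩ greedyCovered μ 𝓡 hwf R) ≤ μ R := by
  rw [greedySelect, Set.mem_ofPred_eq, hwf.fix_eq, greedyCovered]
  simp only [exists_prop, and_comm (a := r _ R)]
  rfl

lemma greedySelect_subset : greedySelect μ 𝓡 hwf ⊆ 𝓡 :=
  fun _ hR => (mem_greedySelect.1 hR).1

lemma subset_greedyCovered {Q R : Set α} (hQ : Q ∈ greedySelect μ 𝓡 hwf) (h : r Q R) :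
    Q ⊆ greedyCovered μ 𝓡 hwf R :=
  Set.subset_sUnion_of_mem ⟨hQ, h⟩

lemma measurableSet_greedyCovered (h𝓡 : 𝓡.Countable) (hmeas : ∀ R ∈ 𝓡, MeasurableSet R)
    (R : Set α) : MeasurableSet (greedyCovered μ 𝓡 hwf R) :=
  MeasurableSet.sUnion (h𝓡.mono fun _ hQ => greedySelect_subset hQ.1)
    fun _ hQ => hmeas _ (greedySelect_subset hQ.1)

lemma measure_le_two_mul_measure_diff_greedyCovered {R : Set α}
    (hR : R ∈ greedySelect μ 𝓡 hwf) (hfin : μ R ≠ ∞) :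
    μ R ≤ 2 * μ (R \ greedyCovered μ 𝓡 hwf R) := by
  have hhalf := (mem_greedySelect.1 hR).2
  have hsplit := measure_le_inter_add_sdiff μ R (greedyCovered μ 𝓡 hwf R)
  refine (ENNReal.add_le_add_iff_left hfin).1 ?_
  calc μ R + μ R ≤ 2 * μ (R ∩ greedyCovered μ 𝓡 hwf R) + 2 * μ (R \ greedyCovered μ 𝓡 hwf R) := by
        rw [← two_mul, ← mul_add]; gcongr
    _ ≤ μ R + 2 * μ (R \ greedyCovered μ 𝓡 hwf R) := by gcongr

lemma pairwiseDisjoint_diff_greedyCovered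
    (htri : ∀ P ∈ 𝓡, ∀ Q ∈ 𝓡, P ≠ Q → r P Q ∨ r Q P) :
    (greedySelect μ 𝓡 hwf).PairwiseDisjoint fun R => R \ greedyCovered μ 𝓡 hwf R := by
  intro P hP Q hQ hPQ
  rw [Function.onFun, Set.disjoint_left]
  rintro x ⟨hxP, hxP'⟩ ⟨hxQ, hxQ'⟩
  rcases htri P (greedySelect_subset hP) Q (greedySelect_subset hQ) hPQ with h | h
  · exact hxQ' (subset_greedyCovered hP h hxP)
  · exact hxP' (subset_greedyCovered hQ h hxQ)

lemma greedySelect_isHalfSparse (h𝓡 : 𝓡.Countable) (hmeas : ∀ R ∈ 𝓡, MeasurableSet R)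
    (hfin : ∀ R ∈ 𝓡, μ R ≠ ∞) (htri : ∀ P ∈ 𝓡, ∀ Q ∈ 𝓡, P ≠ Q → r P Q ∨ r Q P) :
    IsHalfSparse μ (greedySelect μ 𝓡 hwf) := by
  refine ⟨fun R => R \ greedyCovered μ 𝓡 hwf R, fun R hR => ⟨?_, Set.sdiff_subset, ?_⟩,
    pairwiseDisjoint_diff_greedyCovered htri⟩
  · exact (hmeas R (greedySelect_subset hR)).diff (measurableSet_greedyCovered h𝓡 hmeas R)
  · exact measure_le_two_mul_measure_diff_greedyCovered hR (hfin R (greedySelect_subset hR))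

lemma measure_lt_two_mul_measure_inter_greedyCovered {R : Set α} (hR : R ∈ 𝓡)
    (hR' : R ∉ greedySelect μ 𝓡 hwf) : μ R < 2 * μ (R ∩ greedyCovered μ 𝓡 hwf R) :=
  not_le.1 fun h => hR' (mem_greedySelect.2 ⟨hR, h⟩)

end GreedySelection

section SparseMax

variable {α : Type*}

noncomputable def sparseMax (S : Set (Set α)) (a : Set α → ℝ) (y : α) : ℝ :=
  ⨆ R ∈ S, R.indicator (fun _ => a R) y

variable {S : Set (Set α)} {a : Set α → ℝ} {M : ℝ}

lemma sparseMax_nonneg (ha : ∀ R ∈ S, 0 ≤ a R) (y : α) : 0 ≤ sparseMax S a y :=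
  Real.iSup_nonneg fun R => Real.iSup_nonneg fun hR => Set.indicator_nonneg (fun _ _ => ha R hR) y

lemma sparseMax_le (haM : ∀ R ∈ S, a R ≤ M) (hM : 0 ≤ M) (y : α) : sparseMax S a y ≤ M :=
  Real.iSup_le (fun R => Real.iSup_le (fun hR => Set.indicator_apply_le' (fun _ => haM R hR)
    fun _ => hM) hM) hM

lemma le_sparseMax (haM : ∀ R ∈ S, a R ≤ M) {R : Set α} (hR : R ∈ S) {y : α} (hy : y ∈ R) :
    a R ≤ sparseMax S a y := by
  have hbdd : BddAbove (Set.range fun Q => ⨆ _ : Q ∈ S, Q.indicator (fun _ => a Q) y) :=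
    ⟨max M 0, Set.forall_mem_range.2 fun Q => Real.iSup_le (fun hQ => Set.indicator_apply_le'
      (fun _ => le_max_of_le_left (haM Q hQ)) fun _ => le_max_right M 0) (le_max_right M 0)⟩
  calc a R = ⨆ _ : R ∈ S, R.indicator (fun _ => a R) y := by
        rw [ciSup_pos hR, Set.indicator_of_mem hy]
    _ ≤ sparseMax S a y := le_ciSup hbdd R

end SparseMax

theorem exists_isHalfSparse_measure_lt_two_mul_measure_le_sparseMax {α : Type*}
    [MeasurableSpace α] (μ : Measure α) {𝓡 : Set (Set α)} (h𝓡 : 𝓡.Countable)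
    (hmeas : ∀ R ∈ 𝓡, MeasurableSet R) (hpos : ∀ R ∈ 𝓡, μ R ≠ 0) (hfin : ∀ R ∈ 𝓡, μ R ≠ ∞)
    {a : Set α → ℝ} {M : ℝ} (ha : ∀ R ∈ 𝓡, 0 < a R) (haM : ∀ R ∈ 𝓡, a R ≤ M) :
    ∃ S ⊆ 𝓡, IsHalfSparse μ S ∧ ∀ R ∈ 𝓡, μ R < 2 * μ {x ∈ R | a R / 2 ≤ sparseMax S a x} := by
  obtain ⟨r, hwf, htri, hr⟩ := exists_wellFounded_forall_lt_two_mul h𝓡 ha haM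
  set S := greedySelect μ 𝓡 hwf
  have hSM : ∀ R ∈ S, a R ≤ M := fun R hR => haM R (greedySelect_subset hR)
  refine ⟨S, greedySelect_subset, greedySelect_isHalfSparse h𝓡 hmeas hfin htri, fun R hR => ?_⟩
  by_cases hRS : R ∈ S
  · have hall : {x ∈ R | a R / 2 ≤ sparseMax S a x} = R := by
      refine Set.sep_eq_self_iff_mem_true.2 fun x hx => ?_
      linarith [ha R hR, le_sparseMax hSM hRS hx]
    rw [hall]
    exact two_mul (μ R) ▸ ENNReal.lt_add_right (hfin R hR) (hpos R hR)
  · calc μ R < 2 * μ (R ∩ greedyCovered μ 𝓡 hwf R) :=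
          measure_lt_two_mul_measure_inter_greedyCovered hR hRS
      _ ≤ 2 * μ {x ∈ R | a R / 2 ≤ sparseMax S a x} := by
          gcongr
          rintro x ⟨hxR, hxC⟩
          obtain ⟨Q, ⟨hQS, hQR⟩, hxQ⟩ := hxC
          have := hr Q (greedySelect_subset hQS) R hR hQR
          exact ⟨hxR, by linarith [le_sparseMax hSM hQS hxQ]⟩

section Dyadic

lemma dyadicCube_eq_pi (d : ℕ) (k : ℤ) (n : Fin d → ℤ) :
    dyadicCube d k n =
      Set.univ.pi fun i => Set.Ico ((n i : ℝ) * 2 ^ (-k)) ((n i + 1) * 2 ^ (-k)) := by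
  ext x; simp [dyadicCube, Set.mem_pi]

lemma measurableSet_dyadicCube (d : ℕ) (k : ℤ) (n : Fin d → ℤ) :
    MeasurableSet (dyadicCube d k n) := by
  rw [dyadicCube_eq_pi]; exact MeasurableSet.univ_pi fun _ => measurableSet_Ico

lemma volume_dyadicCube (d : ℕ) (k : ℤ) (n : Fin d → ℤ) :
    volume (dyadicCube d k n) = ENNReal.ofReal (2 ^ (-k)) ^ d := by
  simp only [dyadicCube_eq_pi, volume_pi_pi, Real.volume_Ico, add_mul, one_mul, add_sub_cancel_left,
    Finset.prod_const, Finset.card_univ, Fintype.card_fin]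

variable {d₁ d₂ : ℕ} {R : Set ((Fin d₁ → ℝ) × (Fin d₂ → ℝ))}

lemma countable_setOf_isDyadicRect : {R | IsDyadicRect d₁ d₂ R}.Countable := by
  refine (Set.countable_range fun p : (ℤ × (Fin d₁ → ℤ)) × (ℤ × (Fin d₂ → ℤ)) =>
    dyadicCube d₁ p.1.1 p.1.2 ×ˢ dyadicCube d₂ p.2.1 p.2.2).mono ?_
  rintro R ⟨k₁, n₁, k₂, n₂, rfl⟩
  exact ⟨((k₁, n₁), (k₂, n₂)), rfl⟩

lemma IsDyadicRect.measurableSet (hR : IsDyadicRect d₁ d₂ R) : MeasurableSet R := by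
  obtain ⟨k₁, n₁, k₂, n₂, rfl⟩ := hR
  exact (measurableSet_dyadicCube _ _ _).prod (measurableSet_dyadicCube _ _ _)

lemma IsDyadicRect.volume_ne_zero (hR : IsDyadicRect d₁ d₂ R) : volume R ≠ 0 := by
  obtain ⟨k₁, n₁, k₂, n₂, rfl⟩ := hR
  rw [Measure.volume_eq_prod, Measure.prod_prod, volume_dyadicCube, volume_dyadicCube]
  exact mul_ne_zero (pow_ne_zero _ (ENNReal.ofReal_pos.2 (by positivity)).ne')
    (pow_ne_zero _ (ENNReal.ofReal_pos.2 (by positivity)).ne')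

lemma IsDyadicRect.volume_ne_top (hR : IsDyadicRect d₁ d₂ R) : volume R ≠ ∞ := by
  obtain ⟨k₁, n₁, k₂, n₂, rfl⟩ := hR
  rw [Measure.volume_eq_prod, Measure.prod_prod, volume_dyadicCube, volume_dyadicCube]
  exact ENNReal.mul_ne_top (ENNReal.pow_ne_top ENNReal.ofReal_ne_top)
    (ENNReal.pow_ne_top ENNReal.ofReal_ne_top)

end Dyadic

section Averages

variable {d₁ d₂ : ℕ} {R : Set ((Fin d₁ → ℝ) × (Fin d₂ → ℝ))}

lemma abs_rectAvg_le {f : (Fin d₁ → ℝ) × (Fin d₂ → ℝ) → ℝ} {M : ℝ} (hfM : ∀ x, |f x| ≤ M)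
    (hR : volume R ≠ ∞) : |rectAvg R f| ≤ M := by
  have hint : ‖∫ y in R, f y‖ ≤ M * volume.real R :=
    norm_setIntegral_le_of_norm_le_const hR.lt_top fun x _ => (Real.norm_eq_abs _).trans_le (hfM x)
  rw [Real.norm_eq_abs] at hint
  rw [rectAvg, ← measureReal_def, abs_mul, abs_inv, abs_of_nonneg measureReal_nonneg]
  rcases measureReal_nonneg.eq_or_lt with h0 | hpos
  · rw [← h0, inv_zero, zero_mul]; exact (abs_nonneg _).trans (hfM 0)
  · rw [inv_mul_le_iff₀ hpos]; linarith

variable {g : (Fin d₁ → ℝ) × (Fin d₂ → ℝ) → ℝ} {B : ℝ}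

lemma le_rectPerc_half (hgB : ∀ x, g x ≤ B) {t : ℝ}
    (h : volume R < 2 * volume {x ∈ R | t ≤ g x}) : t ≤ rectPerc R (1 / 2) g := by
  refine le_csInf ⟨B, ?_⟩ fun l hl => not_lt.1 fun hlt => ?_
  · simp [(hgB _).not_gt]
  · have hsub : {x ∈ R | t ≤ g x} ⊆ {x ∈ R | g x > l} := fun x hx => ⟨hx.1, hlt.trans_le hx.2⟩
    have : 2 * volume {x ∈ R | t ≤ g x} ≤ volume R := by
      calc 2 * volume {x ∈ R | t ≤ g x} ≤ 2 * (ENNReal.ofReal (1 / 2) * volume R) := by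
            gcongr; exact (measure_mono hsub).trans hl
        _ = volume R := by
            rw [← mul_assoc, ← ENNReal.ofReal_ofNat 2, ← ENNReal.ofReal_mul zero_le_two]
            norm_num
    exact h.not_ge this

lemma rectPerc_le (hgB : ∀ x, g x ≤ B) (hB : 0 ≤ B) : rectPerc R (1 / 2) g ≤ B := by
  by_cases hbdd : BddBelow {l : ℝ | volume {x ∈ R | g x > l} ≤ ENNReal.ofReal (1 / 2) * volume R}
  · exact csInf_le hbdd (by simp [(hgB _).not_gt])
  · exact (Real.sInf_of_not_bddBelow hbdd).trans_le hB

lemma rectPerc_nonneg (hR : IsDyadicRect d₁ d₂ R) (hg : ∀ x, 0 ≤ g x) (hgB : ∀ x, g x ≤ B) :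
    0 ≤ rectPerc R (1 / 2) g := by
  refine le_rectPerc_half hgB ?_
  rw [Set.sep_eq_self_iff_mem_true.2 fun x _ => hg x]
  exact two_mul (volume R) ▸ ENNReal.lt_add_right hR.volume_ne_top hR.volume_ne_zero

lemma strongMax_le_mul_strongPercMax {f : (Fin d₁ → ℝ) × (Fin d₂ → ℝ) → ℝ} {C : ℝ} (hC : 0 ≤ C)
    (hg : ∀ x, 0 ≤ g x) (hgB : ∀ x, g x ≤ B) (hB : 0 ≤ B)
    (hf : ∀ R, IsDyadicRect d₁ d₂ R → |rectAvg R f| ≤ C * rectPerc R (1 / 2) g)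
    (x : (Fin d₁ → ℝ) × (Fin d₂ → ℝ)) :
    strongMax d₁ d₂ f x ≤ C * strongPercMax d₁ d₂ g x := by
  have hbdd : BddAbove {t : ℝ | ∃ R, IsDyadicRect d₁ d₂ R ∧ x ∈ R ∧ t = rectPerc R (1 / 2) g} := by
    refine ⟨B, ?_⟩
    rintro t ⟨R, -, -, rfl⟩
    exact rectPerc_le hgB hB
  have hnonneg : 0 ≤ strongPercMax d₁ d₂ g x := by
    refine Real.sSup_nonneg ?_
    rintro t ⟨R, hR, -, rfl⟩
    exact rectPerc_nonneg hR hg hgB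
  refine Real.sSup_le ?_ (mul_nonneg hC hnonneg)
  rintro t ⟨R, hR, hxR, rfl⟩
  exact (hf R hR).trans (mul_le_mul_of_nonneg_left (le_csSup hbdd ⟨R, hR, hxR, rfl⟩) hC)

end Averages

theorem stmt7_general (d₁ d₂ : ℕ) :
    ∃ C : ℝ, 0 < C ∧
      ∀ f : (Fin d₁ → ℝ) × (Fin d₂ → ℝ) → ℝ, Measurable f → (∃ M : ℝ, ∀ x, |f x| ≤ M) →
        ∃ S : Set (Set ((Fin d₁ → ℝ) × (Fin d₂ → ℝ))),
          S.Countable ∧ (∀ R ∈ S, IsDyadicRect d₁ d₂ R) ∧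
          -- S is 1/2-sparse
          (∃ Esel : Set ((Fin d₁ → ℝ) × (Fin d₂ → ℝ)) → Set ((Fin d₁ → ℝ) × (Fin d₂ → ℝ)),
            (∀ R ∈ S, MeasurableSet (Esel R) ∧ Esel R ⊆ R ∧ volume R ≤ 2 * volume (Esel R)) ∧
            S.PairwiseDisjoint Esel) ∧
          ∀ x, strongMax d₁ d₂ f x ≤
            C * strongPercMax d₁ d₂
              (fun y => ⨆ R ∈ S, Set.indicator R (fun _ => |rectAvg R f|) y) x := by
  refine ⟨2, two_pos, fun f _ ⟨M, hfM⟩ => ?_⟩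
  have hM : 0 ≤ M := (abs_nonneg _).trans (hfM 0)
  have hcount := countable_setOf_isDyadicRect (d₁ := d₁) (d₂ := d₂)
  obtain ⟨S, hS, hsparse, hcover⟩ :=
    exists_isHalfSparse_measure_lt_two_mul_measure_le_sparseMax volume
      (𝓡 := {R | IsDyadicRect d₁ d₂ R ∧ 0 < |rectAvg R f|}) (a := fun R => |rectAvg R f|)
      (hcount.mono fun _ hR => hR.1) (fun _ hR => hR.1.measurableSet)
      (fun _ hR => hR.1.volume_ne_zero) (fun _ hR => hR.1.volume_ne_top) (fun _ hR => hR.2)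
      (fun _ hR => abs_rectAvg_le hfM hR.1.volume_ne_top)
  have hG := sparseMax_nonneg (S := S) (a := fun R => |rectAvg R f|) fun _ _ => abs_nonneg _
  have hGM := sparseMax_le (fun R hR => abs_rectAvg_le hfM (hS hR).1.volume_ne_top) hM
  refine ⟨S, hcount.mono fun R hR => (hS hR).1, fun R hR => (hS hR).1, hsparse,
    strongMax_le_mul_strongPercMax zero_le_two hG hGM hM fun R hR => ?_⟩
  rcases (abs_nonneg (rectAvg R f)).eq_or_lt with h0 | hpos
  · rw [← h0]
    exact mul_nonneg zero_le_two (rectPerc_nonneg hR hG hGM)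
  · exact (div_le_iff₀' two_pos).1 (le_rectPerc_half hGM (hcover R ⟨hR, hpos⟩))

theorem stmt7 (d₁ d₂ : ℕ) (hd₁ : 0 < d₁) (hd₂ : 0 < d₂) :
    ∃ C : ℝ, 0 < C ∧
      ∀ f : (Fin d₁ → ℝ) × (Fin d₂ → ℝ) → ℝ, Measurable f → (∃ M : ℝ, ∀ x, |f x| ≤ M) →
        ∃ S : Set (Set ((Fin d₁ → ℝ) × (Fin d₂ → ℝ))),
          S.Countable ∧ (∀ R ∈ S, IsDyadicRect d₁ d₂ R) ∧
          -- S is 1/2-sparse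
          (∃ Esel : Set ((Fin d₁ → ℝ) × (Fin d₂ → ℝ)) → Set ((Fin d₁ → ℝ) × (Fin d₂ → ℝ)),
            (∀ R ∈ S, MeasurableSet (Esel R) ∧ Esel R ⊆ R ∧ volume R ≤ 2 * volume (Esel R)) ∧
            S.PairwiseDisjoint Esel) ∧
          ∀ x, strongMax d₁ d₂ f x ≤
            C * strongPercMax d₁ d₂
              (fun y => ⨆ R ∈ S, Set.indicator R (fun _ => |rectAvg R f|) y) x :=
  stmt7_general d₁ d₂
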